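/- If a pair of integers (a,b) occurs as consecutive values of the infinity series at an even position (i.e., s(2k) = a and s(2k+1) = b for some k), then it never occurs at an odd position (i.e., there is no m with s(2m+1) = a and s(2m+2) = b). -/
import Mathlib


def s : ℕ → ℤ
  | 0 => 0
  | n + 1 =>
    if (n + 1) % 2 = 0 then -s ((n + 1) / 2)
    else s (n / 2) + 1
decreasing_by all_goals omega

lemma s_two_mul (n : ℕ) : s (2 * n) = -s n := by
  rcases n with _ | m
  · simp [s]
  · rw [show 2 * (m + 1) = (2 * m + 1) + 1 from by ring, s]
    rw [if_pos (by omega : (2 * m + 1 + 1) % 2 = 0),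
      show (2 * m + 1 + 1) / 2 = m + 1 from by omega]

lemma s_two_mul_add_one (n : ℕ) : s (2 * n + 1) = s n + 1 := by
  rw [show 2 * n + 1 = (2 * n) + 1 from rfl, s]
  rw [if_neg (by omega : ¬ (2 * n + 1) % 2 = 0),
    show (2 * n) / 2 = n from by omega]

lemma diff_even_neg : ∀ n : ℕ, Even (s (n + 1) - s n) → s (n + 1) - s n < 0 := by
  intro n
  induction n using Nat.strong_induction_on with
  | _ n ih =>
    intro h
    rcases Nat.even_or_odd n with ⟨t, ht⟩ | ⟨t, ht⟩
    · have hn : n = 2 * t := by omega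
      subst hn
      rw [show 2 * t + 1 = 2 * t + 1 from rfl, s_two_mul_add_one, s_two_mul] at h
      rcases h with ⟨r, hr⟩
      omega
    · have hn : n = 2 * t + 1 := by omega
      subst hn
      rw [show 2 * t + 1 + 1 = 2 * (t + 1) from by ring, s_two_mul,
        s_two_mul_add_one] at h ⊢
      rcases Nat.even_or_odd t with ⟨u, hu⟩ | ⟨u, hu⟩
      · have htu : t = 2 * u := by omega
        subst htu
        rw [show 2 * u + 1 = 2 * u + 1 from rfl, s_two_mul_add_one, s_two_mul]
        omega
      · have htu : t = 2 * u + 1 := by omega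
        subst htu
        rw [show 2 * u + 1 + 1 = 2 * (u + 1) from by ring, s_two_mul,
          s_two_mul_add_one] at h ⊢
        have hEu : Even (s (u + 1) - s u) := by
          rcases h with ⟨r, hr⟩
          exact ⟨r + 1, by linarith⟩
        have := ih u (by omega) hEu
        omega

lemma s_succ_ne (n : ℕ) : s (n + 1) ≠ s n := by
  intro h
  have := diff_even_neg n (by rw [h]; simp)
  omega

theorem stmt12 (a b : ℤ) (h : ∃ k : ℕ, s (2 * k) = a ∧ s (2 * k + 1) = b) :
    ¬ ∃ m : ℕ, s (2 * m + 1) = a ∧ s (2 * m + 2) = b := by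
  obtain ⟨k, hk1, hk2⟩ := h
  rintro ⟨m, hm1, hm2⟩
  rw [s_two_mul] at hk1
  rw [s_two_mul_add_one] at hk2
  rw [s_two_mul_add_one] at hm1
  rw [show 2 * m + 2 = 2 * (m + 1) from by ring, s_two_mul] at hm2
  have := s_succ_ne m
  omega
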